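/- arXiv:1807.00307 — 3 statements merged into one kernel-verified Lean document; each statement's English description precedes it below -/
import Mathlib

section
/- A nonabelian finite subgroup of the unit group of the quaternions ℍ contains an ℝ-basis of ℍ; in particular, its ℝ-span is all of ℍ. -/
/-!
If `a, b ∈ G` do not commute, then `1, a, b, ab` is already an `ℝ`-basis of `ℍ`: the determinant
of their coordinates in the basis `1, i, j, k` is `‖ab - ba‖² / 4`, i.e. the squared length of the
cross product of the vector parts of `a` and `b`.
-/

namespace Quaternion

variable {R : Type*}

theorem four_mul_det_basisOneIJK_one_mul [CommRing R] (p q : ℍ[R]) :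
    4 * (QuaternionAlgebra.basisOneIJK (-1 : R) 0 (-1)).det ![1, p, q, p * q] =
      normSq (p * q - q * p) := by
  have hrepr (x : ℍ[R]) : ⇑((QuaternionAlgebra.basisOneIJK (-1 : R) 0 (-1)).repr x) =
      ![x.re, x.imI, x.imJ, x.imK] := rfl
  rw [Module.Basis.det_apply, Matrix.det_succ_column_zero]
  simp only [Module.Basis.toMatrix_apply, QuaternionAlgebra.coe_basisOneIJK_repr, hrepr,
    QuaternionAlgebra.re_one, QuaternionAlgebra.imI_one, QuaternionAlgebra.imJ_one,
    QuaternionAlgebra.imK_one, Matrix.det_fin_three, Matrix.submatrix_apply, Matrix.cons_val,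
    Matrix.cons_val_succ, Fin.sum_univ_succ, Fin.coe_ofNat_eq_mod, Fin.zero_succAbove, mul_zero,
    zero_mul, normSq_def', re_mul, imI_mul, imJ_mul, imK_mul, re_sub, imI_sub, imJ_sub, imK_sub]
  ring

theorem span_one_mul_eq_top [Field R] [LinearOrder R] [IsStrictOrderedRing R] {p q : ℍ[R]}
    (hpq : p * q ≠ q * p) : Submodule.span R (Set.range ![1, p, q, p * q]) = ⊤ := by
  have hdet : (QuaternionAlgebra.basisOneIJK (-1 : R) 0 (-1)).det ![1, p, q, p * q] ≠ 0 := by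
    refine right_ne_zero_of_mul (a := (4 : R)) ?_
    rw [four_mul_det_basisOneIJK_one_mul, normSq_ne_zero, sub_ne_zero]
    exact hpq
  exact ((Module.Basis.is_basis_iff_det _).mpr hdet.isUnit).2

end Quaternion

theorem stmt_0_general (G : Subgroup (Quaternion ℝ)ˣ)
    (h : ¬ ∀ a b : G, a * b = b * a) :
    Submodule.span ℝ ((fun u : (Quaternion ℝ)ˣ => (u : Quaternion ℝ)) '' (G : Set (Quaternion ℝ)ˣ)) = ⊤ := by
  push Not at h
  obtain ⟨⟨a, ha⟩, ⟨b, hb⟩, hab⟩ := h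
  have hpq : (a : Quaternion ℝ) * b ≠ b * a := fun hc => hab (Subtype.ext (Units.ext hc))
  rw [eq_top_iff, ← Quaternion.span_one_mul_eq_top hpq]
  refine Submodule.span_mono (Set.range_subset_iff.2 fun i => ?_)
  fin_cases i
  · exact ⟨1, G.one_mem, rfl⟩
  · exact ⟨a, ha, rfl⟩
  · exact ⟨b, hb, rfl⟩
  · exact ⟨a * b, G.mul_mem ha hb, rfl⟩

/-- A nonabelian finite subgroup of the unit group of the quaternions ℍ
contains an ℝ-basis of ℍ; in particular, its ℝ-span is all of ℍ. -/
theorem stmt_0 (G : Subgroup (Quaternion ℝ)ˣ) [Finite G]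
    (h : ¬ ∀ a b : G, a * b = b * a) :
    Submodule.span ℝ ((fun u : (Quaternion ℝ)ˣ => (u : Quaternion ℝ)) '' (G : Set (Quaternion ℝ)ˣ)) = ⊤ :=
  stmt_0_general G h
end

section
/- If G is a finite group with a surjective homomorphism onto a nonabelian finite subgroup of ℍˣ, then the induced ℝ-algebra representation ℝ[G] → ℍ is irreducible, i.e. ℍ is a simple ℝ[G]-module under this action. -/
/-!
The image of `ℝ[G]` in `ℍ` is the real subalgebra generated by `φ(G)`, and it contains two
noncommuting quaternions `u, v`. The pure quaternions `p = im u` and `w = p v - v p` are nonzero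
and anticommute (`p²` is real), so after normalisation they satisfy `i² = j² = -1`, `ji = -ij`.
The algebra map `ℍ → ℍ` they define is injective, hence onto, so the subalgebra is all of `ℍ`.
Thus `ℝ[G] → ℍ` is surjective, and `ℍ`, simple over itself, stays simple after restricting
scalars along a surjection.
-/

open Quaternion

theorem IsSimpleModule.compHom_of_surjective {R S M : Type*} [Ring R] [Ring S] [AddCommGroup M]
    [Module S M] [IsSimpleModule S M] (σ : R →+* S) (hσ : Function.Surjective σ) :
    @IsSimpleModule R _ M _ (Module.compHom M σ) := by
  let := Module.compHom M σ
  have : RingHomSurjective σ := ⟨hσ⟩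
  let id' : M →ₛₗ[σ] M := { toFun := id, map_add' := fun _ _ ↦ rfl, map_smul' := fun _ _ ↦ rfl }
  exact (id'.isSimpleModule_iff_of_bijective Function.bijective_id).mpr ‹_›

namespace Quaternion

section CommRing

variable {R : Type*} [CommRing R]

theorem re_mul_comm (a b : ℍ[R]) : (a * b).re = (b * a).re := by
  simp only [re_mul]
  ring

theorem mul_self_of_re_eq_zero [NoZeroDivisors R] [CharZero R] {p : ℍ[R]} (hp : p.re = 0) :
    p * p = -((normSq p : R) : ℍ[R]) := by
  rw [← self_mul_star, star_eq_neg.mpr hp, mul_neg, neg_neg]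

end CommRing

theorem inv_norm_smul_mul_self {p : ℍ} (hp : p.re = 0) (hp0 : p ≠ 0) :
    (‖p‖⁻¹ • p) * (‖p‖⁻¹ • p) = -1 := by
  have : ‖p‖⁻¹ * ‖p‖⁻¹ * (‖p‖ * ‖p‖) = 1 := by
    field_simp [norm_ne_zero_iff.mpr hp0]
  rw [smul_mul_smul_comm, mul_self_of_re_eq_zero hp, normSq_eq_norm_mul_self, smul_neg,
    smul_coe, this, coe_one]

theorem subalgebra_eq_top_of_basis (A : Subalgebra ℝ ℍ) {i j : ℍ} (hiA : i ∈ A) (hjA : j ∈ A)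
    (hi : i * i = -1) (hj : j * j = -1) (hji : j * i = -(i * j)) : A = ⊤ := by
  let B : QuaternionAlgebra.Basis ℍ (-1 : ℝ) 0 (-1) :=
    { i, j, k := i * j
      i_mul_i := by simp [hi]
      j_mul_j := by simp [hj]
      i_mul_j := rfl
      j_mul_i := by simp [hji] }
  let f : ℍ →ₐ[ℝ] ℍ := B.liftHom
  have hsurj : Function.Surjective f :=
    LinearMap.injective_iff_surjective (f := f.toLinearMap) |>.mp f.toRingHom.injective
  refine top_unique ?_
  rw [← (AlgHom.range_eq_top f).mpr hsurj, show f.range = B.liftHom.range from rfl,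
    B.range_liftHom, Algebra.adjoin_le_iff]
  rintro x (rfl | rfl | rfl)
  exacts [hiA, hjA, A.mul_mem hiA hjA]

theorem subalgebra_eq_top_of_anticommute (A : Subalgebra ℝ ℍ) {p w : ℍ} (hpA : p ∈ A)
    (hwA : w ∈ A) (hp : p.re = 0) (hw : w.re = 0) (hp0 : p ≠ 0) (hw0 : w ≠ 0)
    (hwp : w * p = -(p * w)) : A = ⊤ :=
  subalgebra_eq_top_of_basis A (A.smul_mem hpA _) (A.smul_mem hwA _)
    (inv_norm_smul_mul_self hp hp0) (inv_norm_smul_mul_self hw hw0)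
    (by rw [smul_mul_smul_comm, smul_mul_smul_comm, hwp, smul_neg, mul_comm ‖w‖⁻¹])

theorem subalgebra_eq_top_of_not_commute (A : Subalgebra ℝ ℍ) {u v : ℍ} (hu : u ∈ A)
    (hv : v ∈ A) (huv : ¬Commute u v) : A = ⊤ := by
  have hpA : u.im ∈ A := by
    rw [← sub_re_self]
    exact A.sub_mem hu (A.algebraMap_mem u.re)
  have hwA : u.im * v - v * u.im ∈ A := A.sub_mem (A.mul_mem hpA hv) (A.mul_mem hv hpA)
  have hw0 : u.im * v - v * u.im ≠ 0 := by
    rw [sub_ne_zero]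
    intro hc
    apply huv
    rw [← re_add_im u]
    exact (coe_commute _ v).add_left hc
  have hp0 : u.im ≠ 0 := by
    rintro hp
    simp [hp] at hw0
  have hwp : (u.im * v - v * u.im) * u.im = -(u.im * (u.im * v - v * u.im)) := by
    have hpp : u.im * u.im * v = v * (u.im * u.im) := by
      rw [mul_self_of_re_eq_zero (re_im u)]
      exact (coe_commute _ v).neg_left
    simp only [sub_mul, mul_sub, ← mul_assoc, hpp]
    noncomm_ring
  exact subalgebra_eq_top_of_anticommute A hpA hwA (re_im u)
    (by rw [re_sub, re_mul_comm, sub_self]) hp0 hw0 hwp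

end Quaternion

theorem stmt_2_general (G : Type) [Group G] (φ : G →* (Quaternion ℝ)ˣ)
    (h : ¬ ∀ a b : φ.range, a * b = b * a) :
    @IsSimpleModule (MonoidAlgebra ℝ G) _ (Quaternion ℝ) _
      (Module.compHom (Quaternion ℝ)
        ((MonoidAlgebra.lift ℝ (Quaternion ℝ) G
          ((Units.coeHom (Quaternion ℝ)).comp φ)).toRingHom)) := by
  set ρ := MonoidAlgebra.lift ℝ (Quaternion ℝ) G ((Units.coeHom (Quaternion ℝ)).comp φ)
  push Not at h
  obtain ⟨⟨_, g, rfl⟩, ⟨_, g', rfl⟩, hgg'⟩ := h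
  have hmem (g : G) : (φ g : ℍ) ∈ ρ.range := ⟨MonoidAlgebra.single g 1, by simp [ρ]⟩
  have hnc : ¬Commute (φ g : ℍ) (φ g') := fun hc ↦ hgg' (Subtype.ext (Units.ext hc))
  have hρ : ρ.range = ⊤ := subalgebra_eq_top_of_not_commute _ (hmem g) (hmem g') hnc
  exact IsSimpleModule.compHom_of_surjective ρ.toRingHom ((AlgHom.range_eq_top ρ).mp hρ)

/-- If `G` is a finite group with a homomorphism `φ : G → ℍˣ` whose image is
nonabelian, then the induced ℝ-algebra representation `ℝ[G] → ℍ` is irreducible, i.e. `ℍ` is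
a simple `ℝ[G]`-module under this action. -/
theorem stmt_2 (G : Type) [Group G] [Finite G] (φ : G →* (Quaternion ℝ)ˣ)
    (h : ¬ ∀ a b : φ.range, a * b = b * a) :
    @IsSimpleModule (MonoidAlgebra ℝ G) _ (Quaternion ℝ) _
      (Module.compHom (Quaternion ℝ)
        ((MonoidAlgebra.lift ℝ (Quaternion ℝ) G
          ((Units.coeHom (Quaternion ℝ)).comp φ)).toRingHom)) :=
  stmt_2_general G φ h
end

section
/- For n ≥ 2, the number of copies of ℍ in the Wedderburn decomposition of ℝ[Q_{4n}] equals ⌊n/2⌋. -/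
/-!
A surjection `f : ℝ[Q₄ₙ] → ℍ` is determined by `q = f a` and `u = f x`, which satisfy
`q ^ 2n = 1`, `u² = qⁿ` and `q u q = u`. If `q` were real, the image of `f` would be commutative,
so `Im q ≠ 0`; then `|q| = 1` turns `q u q = u` into `u` anticommuting with `Im q`, which forces
`u` to be a pure unit quaternion, so `qⁿ = u² = -1`. The quaternion basis `(Im q / |Im q|, u)`
gives an automorphism `ψ` of `ℍ` with `f = ψ ∘ ρ_z`, where `ρ_z` sends `a ↦ z`, `x ↦ j` for a
complex `z` with `zⁿ = -1` and `Im z > 0`. Distinct such `z` give distinct kernels, since `ker ρ_z`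
contains the minimal polynomial of `z` over `ℝ` evaluated at `a`. Finally, the non-real roots of
`Xⁿ + 1` come in conjugate pairs and there are `n - (n mod 2)` of them, so `⌊n/2⌋` lie in the upper
half plane.
-/

/-- The number of copies of `ℍ` in the Wedderburn decomposition of a real algebra `A`,
realised as the number of two-sided ideals of `A` arising as kernels of surjective
ℝ-algebra homomorphisms `A → ℍ`. -/
noncomputable def mH (A : Type*) [Ring A] [Algebra ℝ A] : ℕ :=
  Set.ncard {s : Set A | ∃ f : A →ₐ[ℝ] Quaternion ℝ,
    Function.Surjective f ∧ s = {a : A | f a = 0}}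

open Quaternion

theorem ZMod.pow_val_add {m : ℕ} [NeZero m] {M : Type*} [Monoid M] {q : M} (hq : q ^ m = 1)
    (i j : ZMod m) : q ^ (i + j).val = q ^ i.val * q ^ j.val := by
  rw [ZMod.val_add, ← pow_eq_pow_mod _ hq, pow_add]

theorem ZMod.pow_val_natCast {m : ℕ} {M : Type*} [Monoid M] {q : M} (hq : q ^ m = 1) (k : ℕ) :
    q ^ (k : ZMod m).val = q ^ k := by
  rw [ZMod.val_natCast, ← pow_eq_pow_mod _ hq]

theorem pow_mul_mul_pow_eq_self {M : Type*} [Monoid M] {q u : M} (h : q * u * q = u) (m : ℕ) :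
    q ^ m * u * q ^ m = u := by
  induction m with
  | zero => simp
  | succ m ih =>
    nth_rewrite 2 [pow_succ]
    rw [pow_succ', mul_assoc q, mul_assoc q, ← mul_assoc (q ^ m * u), ih, ← mul_assoc, h]

theorem MonoidAlgebra.commute_apply_of_commute_apply_of {k G A : Type*} [CommSemiring k]
    [Monoid G] [Semiring A] [Algebra k A] (f : MonoidAlgebra k G →ₐ[k] A)
    (h : ∀ g g', Commute (f (of k G g)) (f (of k G g'))) (x y : MonoidAlgebra k G) :
    Commute (f x) (f y) := by
  induction x using MonoidAlgebra.induction_on with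
  | of g =>
    induction y using MonoidAlgebra.induction_on with
    | of g' => exact h g g'
    | add y y' hy hy' => rw [map_add]; exact hy.add_right hy'
    | smul r y hy => rw [map_smul]; exact hy.smul_right r
  | add x x' hx hx' => rw [map_add]; exact hx.add_left hx'
  | smul r x hx => rw [map_smul]; exact hx.smul_left r

namespace QuaternionGroup

variable {n : ℕ} [NeZero n] {M : Type*} [Monoid M]

def lift (q u : M) (hq : q ^ (2 * n) = 1) (hu : u * u = q ^ n) (hqu : q * u * q = u) :
    QuaternionGroup n →* M where
  toFun
    | a i => q ^ i.val
    | xa i => u * q ^ i.val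
  map_one' := by simp only [one_def, ZMod.val_zero, pow_zero]
  map_mul' g h := by
    have hswap : ∀ i j : ZMod (2 * n), q ^ i.val * u * q ^ j.val = u * q ^ (j - i).val := by
      intro i j
      conv_lhs => rw [← sub_add_cancel j i, ZMod.pow_val_add hq, (Commute.pow_pow_self q _ _).eq,
        ← mul_assoc, pow_mul_mul_pow_eq_self hqu]
    rcases g with i | i <;> rcases h with j | j
    · simp only [a_mul_a, ZMod.pow_val_add hq]
    · simp only [a_mul_xa, ← mul_assoc, hswap]
    · simp only [xa_mul_a, ZMod.pow_val_add hq, mul_assoc]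
    · simp only [xa_mul_xa, add_sub_assoc, ZMod.pow_val_add hq, ZMod.pow_val_natCast hq, ← hu]
      rw [mul_assoc u u, mul_assoc u (q ^ i.val), ← mul_assoc (q ^ i.val), hswap]

section lift

variable {q u : M} (hq : q ^ (2 * n) = 1) (hu : u * u = q ^ n) (hqu : q * u * q = u)

@[simp]
theorem lift_a (i : ZMod (2 * n)) : lift q u hq hu hqu (a i) = q ^ i.val := rfl

@[simp]
theorem lift_xa (i : ZMod (2 * n)) : lift q u hq hu hqu (xa i) = u * q ^ i.val := rfl

theorem lift_a_one : lift q u hq hu hqu (a 1) = q := by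
  rw [lift_a, ← Nat.cast_one, ZMod.pow_val_natCast hq, pow_one]

theorem lift_xa_zero : lift q u hq hu hqu (xa 0) = u := by
  rw [lift_xa, ZMod.val_zero, pow_zero, mul_one]

theorem commute_lift (h : Commute q u) (g g' : QuaternionGroup n) :
    Commute (lift q u hq hu hqu g) (lift q u hq hu hqu g') := by
  rcases g with i | i <;> rcases g' with j | j <;> simp only [lift_a, lift_xa]
  · exact Commute.pow_pow_self q _ _
  · exact (h.pow_left _).mul_right (Commute.pow_pow_self q _ _)
  · exact (h.symm.pow_right _).mul_left (Commute.pow_pow_self q _ _)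
  · exact ((Commute.refl u).mul_right (h.pow_left _).symm).mul_left
      ((h.pow_left _).mul_right (Commute.pow_pow_self q _ _))

end lift

theorem hom_ext {f g : QuaternionGroup n →* M} (ha : f (a 1) = g (a 1))
    (hxa : f (xa 0) = g (xa 0)) : f = g := by
  have hai : ∀ i : ZMod (2 * n), a i = a 1 ^ i.val := by
    intro i; rw [a_one_pow, ZMod.natCast_zmod_val]
  ext (i | i)
  · rw [hai, map_pow, map_pow, ha]
  · rw [← zero_add i, ← xa_mul_a, hai, map_mul, map_mul, map_pow, map_pow, ha, hxa]

end QuaternionGroup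

namespace Quaternion

def j : ℍ[ℝ] := ⟨0, 0, 1, 0⟩

@[simp] theorem re_j : j.re = 0 := rfl
@[simp] theorem imI_j : j.imI = 0 := rfl
@[simp] theorem imJ_j : j.imJ = 1 := rfl
@[simp] theorem imK_j : j.imK = 0 := rfl

theorem j_mul_j : j * j = -1 := by ext <;> simp

theorem not_commute_I_j : ¬Commute ((Complex.I : ℂ) : ℍ[ℝ]) j := by
  intro h
  have := congrArg QuaternionAlgebra.imK h.eq
  norm_num at this

theorem exists_not_commute_of_surjective {G : Type*} [Monoid G]
    {f : MonoidAlgebra ℝ G →ₐ[ℝ] ℍ[ℝ]} (hf : Function.Surjective f) :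
    ∃ g g', ¬Commute (f (MonoidAlgebra.of ℝ G g)) (f (MonoidAlgebra.of ℝ G g')) := by
  by_contra! h
  obtain ⟨x, hx⟩ := hf ((Complex.I : ℂ) : ℍ[ℝ])
  obtain ⟨y, hy⟩ := hf j
  have := MonoidAlgebra.commute_apply_of_commute_apply_of f h x y
  rw [hx, hy] at this
  exact not_commute_I_j this

theorem coeComplex_pow (z : ℂ) (m : ℕ) : ((z ^ m : ℂ) : ℍ[ℝ]) = (z : ℍ[ℝ]) ^ m :=
  map_pow ofComplex z m

theorem coeComplex_mul_j_mul_coeComplex (z : ℂ) :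
    (z : ℍ[ℝ]) * j * z = Complex.normSq z • j := by
  ext <;> simp [Complex.normSq_apply]; ring

theorem normSq_eq_one_of_pow_eq_one {q : ℍ[ℝ]} {m : ℕ} (hq : q ^ m = 1) (hm : m ≠ 0) :
    normSq q = 1 :=
  (pow_eq_one_iff_of_nonneg normSq_nonneg hm).1 (by rw [← map_pow, hq, map_one])

theorem im_mul_eq_neg_mul_im {q u : ℍ[ℝ]} (hq : normSq q = 1) (hqu : q * u * q = u) :
    q.im * u = -(u * q.im) := by
  have hstar : q * u = u * star q :=
    calc q * u = q * u * (q * star q) := by rw [self_mul_star, hq, coe_one, mul_one]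
      _ = u * star q := by rw [← mul_assoc, hqu]
  have hr : ((2 * q.re : ℝ) : ℍ[ℝ]) = q.re + q.re := by rw [two_mul, coe_add]
  rw [star_eq_two_re_sub, hr] at hstar
  rw [← sub_eq_of_eq_add' (re_add_im q).symm, sub_mul, mul_sub, hstar, coe_commutes]
  noncomm_ring

theorem re_eq_zero_of_mul_eq_neg_mul {p u : ℍ[ℝ]} (hp : p.re = 0) (hp0 : p ≠ 0)
    (h : p * u = -(u * p)) : u.re = 0 := by
  have hI := congrArg QuaternionAlgebra.imI h
  have hJ := congrArg QuaternionAlgebra.imJ h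
  have hK := congrArg QuaternionAlgebra.imK h
  simp only [imI_mul, imJ_mul, imK_mul, imI_neg, imJ_neg, imK_neg, hp] at hI hJ hK
  by_contra hu
  apply hp0
  ext
  · exact hp
  · exact (mul_eq_zero.1 (by linarith : u.re * p.imI = 0)).resolve_left hu
  · exact (mul_eq_zero.1 (by linarith : u.re * p.imJ = 0)).resolve_left hu
  · exact (mul_eq_zero.1 (by linarith : u.re * p.imK = 0)).resolve_left hu

theorem exists_algHom_apply_coeComplex {q u : ℍ[ℝ]} (him : q.im ≠ 0) (hu : u * u = -1)
    (hqu : q.im * u = -(u * q.im)) :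
    ∃ z : ℂ, 0 < z.im ∧ ∃ ψ : ℍ[ℝ] →ₐ[ℝ] ℍ[ℝ], ψ z = q ∧ ψ j = u := by
  set s := ‖q.im‖
  have hs : 0 < s := norm_pos_iff.2 him
  set v := s⁻¹ • q.im
  have hv : v * v = -1 := by
    have : q.im * q.im = -(s * s : ℝ) := by rw [← sq, im_sq, normSq_eq_norm_mul_self]
    rw [smul_mul_smul_comm, this, ← coe_neg, smul_coe,
      show s⁻¹ * s⁻¹ * -(s * s) = -1 by field_simp, coe_neg, coe_one]
  have hvu : u * v = -(v * u) := by
    rw [mul_smul_comm, smul_mul_assoc, hqu, smul_neg, neg_neg]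
  let B : QuaternionAlgebra.Basis ℍ[ℝ] (-1 : ℝ) 0 (-1) :=
    { i := v, j := u, k := v * u
      i_mul_i := by rw [hv]; simp
      j_mul_j := by rw [hu]; simp
      i_mul_j := rfl
      j_mul_i := by rw [hvu]; simp }
  refine ⟨⟨q.re, s⟩, hs, B.liftHom, ?_, ?_⟩
  · show B.lift _ = _
    simp only [QuaternionAlgebra.Basis.lift, B, re_coeComplex, imI_coeComplex, imJ_coeComplex,
      imK_coeComplex, algebraMap_def, zero_smul, add_zero]
    rw [smul_inv_smul₀ hs.ne', re_add_im]
  · show B.lift _ = _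
    simp [QuaternionAlgebra.Basis.lift, B]

theorem eq_top_of_coeComplex_mem {S : Subalgebra ℝ ℍ[ℝ]} {z : ℂ} (hz : z.im ≠ 0)
    (hzS : (z : ℍ[ℝ]) ∈ S) (hj : j ∈ S) : S = ⊤ := by
  set i : ℍ[ℝ] := ((Complex.I : ℂ) : ℍ[ℝ])
  have hi : i ∈ S := by
    have : i = z.im⁻¹ • ((z : ℍ[ℝ]) - algebraMap ℝ ℍ[ℝ] z.re) := by
      ext <;> simp [i, algebraMap_def, hz]
    rw [this]
    exact S.smul_mem (S.sub_mem hzS (S.algebraMap_mem _)) _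
  refine eq_top_iff.2 fun x _ => ?_
  have hx : x = algebraMap ℝ ℍ[ℝ] x.re + x.imI • i + x.imJ • j + x.imK • (i * j) := by
    ext <;> simp [i, algebraMap_def]
  rw [hx]
  exact S.add_mem (S.add_mem (S.add_mem (S.algebraMap_mem _) (S.smul_mem hi _))
    (S.smul_mem hj _)) (S.smul_mem (S.mul_mem hi hj) _)

end Quaternion

namespace Complex

theorem normSq_eq_one_of_pow_eq_neg_one {z : ℂ} {n : ℕ} (hz : z ^ n = -1) : normSq z = 1 := by
  have hn : n ≠ 0 := by rintro rfl; norm_num at hz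
  have h2n : z ^ (2 * n) = 1 := by rw [pow_mul', hz, neg_one_sq]
  rw [normSq_eq_norm_sq, norm_eq_one_of_pow_eq_one h2n (by omega), one_pow]

theorem sq_sub_two_re_mul_add_one {z : ℂ} (hz : normSq z = 1) (w : ℂ) :
    w ^ 2 - 2 * z.re * w + 1 = (w - z) * (w - starRingEnd ℂ z) := by
  have hadd := add_conj z
  have hmul := mul_conj z
  rw [hz] at hmul
  push_cast at hadd hmul
  linear_combination w * hadd - hmul

theorem eq_neg_one_of_pow_eq_neg_one_of_im_eq_zero {z : ℂ} {n : ℕ} (hz : z ^ n = -1)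
    (him : z.im = 0) : z = -1 ∧ Odd n := by
  rw [← re_add_im z, him, ofReal_zero, zero_mul, add_zero] at hz ⊢
  rw [← ofReal_pow, ← ofReal_one, ← ofReal_neg, ofReal_inj, pow_eq_neg_one_iff] at hz
  exact ⟨by rw [hz.1, ofReal_neg, ofReal_one], hz.2⟩

section

variable {n : ℕ} (hn : 0 < n)
include hn

theorem card_nthRoots_neg_one : (Polynomial.nthRoots n (-1 : ℂ)).toFinset.card = n := by
  have hζ := isPrimitiveRoot_exp n hn.ne'
  rw [Multiset.toFinset_card_of_nodup (hζ.nthRoots_nodup (by norm_num)), hζ.card_nthRoots,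
    if_pos (IsAlgClosed.exists_pow_nat_eq _ hn)]

theorem card_filter_im_eq_zero_nthRoots_neg_one :
    ((Polynomial.nthRoots n (-1 : ℂ)).toFinset.filter fun z => z.im = 0).card = n % 2 := by
  have : (Polynomial.nthRoots n (-1 : ℂ)).toFinset.filter (fun z => z.im = 0) =
      if Odd n then {-1} else ∅ := by
    ext z
    rw [Finset.mem_filter, Multiset.mem_toFinset, Polynomial.mem_nthRoots hn]
    split_ifs with hodd
    · rw [Finset.mem_singleton]
      refine ⟨fun h => (eq_neg_one_of_pow_eq_neg_one_of_im_eq_zero h.1 h.2).1, ?_⟩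
      rintro rfl
      exact ⟨hodd.neg_one_pow, by simp⟩
    · exact ⟨fun h => absurd (eq_neg_one_of_pow_eq_neg_one_of_im_eq_zero h.1 h.2).2 hodd,
        fun h => absurd h (Finset.notMem_empty z)⟩
  rw [this]
  split_ifs with hodd
  · rw [Finset.card_singleton, Nat.odd_iff.1 hodd]
  · rw [Finset.card_empty, Nat.not_odd_iff.1 hodd]

end

theorem ncard_setOf_pow_eq_neg_one_and_im_pos (n : ℕ) :
    {z : ℂ | z ^ n = -1 ∧ 0 < z.im}.ncard = n / 2 := by
  rcases Nat.eq_zero_or_pos n with rfl | hn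
  · norm_num
  set S := (Polynomial.nthRoots n (-1 : ℂ)).toFinset
  have hmem : ∀ z, z ∈ S ↔ z ^ n = -1 := fun z => by
    rw [Multiset.mem_toFinset, Polynomial.mem_nthRoots hn]
  have hconj : (S.filter fun z => z.im < 0).card = (S.filter fun z => 0 < z.im).card := by
    refine Finset.card_nbij' (starRingEnd ℂ) (starRingEnd ℂ) ?_ ?_ ?_ ?_ <;>
      simp +contextual [Set.MapsTo, Set.LeftInvOn, hmem, ← map_pow]
  have hsplit := Finset.card_filter_add_card_filter_not (s := S) (fun z => 0 < z.im)
  simp_rw [not_lt, le_iff_lt_or_eq, Finset.filter_or] at hsplit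
  rw [Finset.card_union_of_disjoint (Finset.disjoint_filter.2 fun z _ h h' => h.ne h'),
    card_filter_im_eq_zero_nthRoots_neg_one hn, card_nthRoots_neg_one hn] at hsplit
  have hS : {z : ℂ | z ^ n = -1 ∧ 0 < z.im} = ↑(S.filter fun z => 0 < z.im) := by
    ext z; simp [hmem]
  rw [hS, Set.ncard_coe_finset]
  omega

end Complex

namespace QuaternionGroup

variable {n : ℕ} [NeZero n] {z : ℂ}

noncomputable def quaternionRep (z : ℂ) (hz : z ^ n = -1) :
    MonoidAlgebra ℝ (QuaternionGroup n) →ₐ[ℝ] ℍ[ℝ] :=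
  MonoidAlgebra.lift ℝ ℍ[ℝ] (QuaternionGroup n) <| lift (z : ℍ[ℝ]) j
    (by rw [← coeComplex_pow, pow_mul', hz, neg_one_sq, coeComplex_one])
    (by rw [j_mul_j, ← coeComplex_pow, hz, ← coe_ofComplex, map_neg, map_one])
    (by rw [coeComplex_mul_j_mul_coeComplex, Complex.normSq_eq_one_of_pow_eq_neg_one hz,
      one_smul])

theorem quaternionRep_of_a_one (hz : z ^ n = -1) :
    quaternionRep z hz (MonoidAlgebra.of ℝ _ (a 1)) = z := by
  rw [quaternionRep, MonoidAlgebra.lift_of, lift_a_one]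

theorem quaternionRep_of_xa_zero (hz : z ^ n = -1) :
    quaternionRep z hz (MonoidAlgebra.of ℝ _ (xa 0)) = j := by
  rw [quaternionRep, MonoidAlgebra.lift_of, lift_xa_zero]

theorem quaternionRep_surjective (hz : z ^ n = -1) (him : z.im ≠ 0) :
    Function.Surjective (quaternionRep z hz) := by
  rw [← AlgHom.range_eq_top]
  exact eq_top_of_coeComplex_mem him ⟨_, quaternionRep_of_a_one hz⟩
    ⟨_, quaternionRep_of_xa_zero hz⟩

theorem quaternionRep_aeval (hz : z ^ n = -1) (p : Polynomial ℝ) :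
    quaternionRep z hz (Polynomial.aeval (MonoidAlgebra.of ℝ _ (a 1)) p) =
      Polynomial.aeval z p := by
  rw [← Polynomial.aeval_algHom_apply, quaternionRep_of_a_one, ← coe_ofComplex,
    Polynomial.aeval_algHom_apply]

theorem exists_eq_comp_quaternionRep
    (f : MonoidAlgebra ℝ (QuaternionGroup n) →ₐ[ℝ] ℍ[ℝ]) (hf : Function.Surjective f) :
    ∃ z : ℂ, ∃ hz : z ^ n = -1, 0 < z.im ∧
      ∃ ψ : ℍ[ℝ] →ₐ[ℝ] ℍ[ℝ], f = ψ.comp (quaternionRep z hz) := by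
  set F := (f : MonoidAlgebra ℝ (QuaternionGroup n) →* ℍ[ℝ]).comp (MonoidAlgebra.of ℝ _)
  have hq : F (a 1) ^ (2 * n) = 1 := by rw [← map_pow, a_one_pow_n, map_one]
  have hu : F (xa 0) * F (xa 0) = F (a 1) ^ n := by
    rw [← map_mul, ← map_pow, xa_mul_xa, a_one_pow, add_sub_cancel_right]
  have hqu : F (a 1) * F (xa 0) * F (a 1) = F (xa 0) := by
    rw [← map_mul, ← map_mul, a_mul_xa, xa_mul_a, sub_add_cancel]
  set q := F (a 1)
  set u := F (xa 0)
  have him : q.im ≠ 0 := by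
    intro h0
    have hcomm : Commute q u := by
      rw [← re_add_im q, h0, add_zero]
      exact coe_commutes _ _
    have hF : F = lift q u hq hu hqu := hom_ext (lift_a_one ..).symm (lift_xa_zero ..).symm
    obtain ⟨g, g', hgg'⟩ := exists_not_commute_of_surjective hf
    have := commute_lift hq hu hqu hcomm g g'
    rw [← hF] at this
    exact hgg' this
  have hq1 := normSq_eq_one_of_pow_eq_one hq (by simp [NeZero.ne n])
  have hanti := im_mul_eq_neg_mul_im hq1 hqu
  have hu1 : u * u = -1 := by
    have hure := re_eq_zero_of_mul_eq_neg_mul (re_im q) him hanti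
    have hu4 : u ^ 4 = 1 := by
      rw [show u ^ 4 = (u * u) ^ 2 by rw [← sq, ← pow_mul], hu, ← pow_mul, mul_comm, hq]
    rw [← sq, sq_eq_neg_normSq.2 hure, normSq_eq_one_of_pow_eq_one hu4 (by norm_num), coe_one]
  obtain ⟨z, hzim, ψ, hψz, hψj⟩ := exists_algHom_apply_coeComplex him hu1 hanti
  have hzn : z ^ n = -1 := by
    apply (ψ.comp ofComplex).toRingHom.injective
    rw [map_pow, map_neg, map_one]
    show ψ (ofComplex z) ^ n = -1
    rw [coe_ofComplex, hψz, ← hu, hu1]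
  refine ⟨z, hzn, hzim, ψ, MonoidAlgebra.algHom_ext' (hom_ext ?_ ?_) (Subsingleton.elim _ _)⟩
  · exact ((congrArg ψ (quaternionRep_of_a_one hzn)).trans hψz).symm
  · exact ((congrArg ψ (quaternionRep_of_xa_zero hzn)).trans hψj).symm

open Polynomial in
theorem eq_of_setOf_quaternionRep_eq_zero {z w : ℂ} (hz : z ^ n = -1) (hw : w ^ n = -1)
    (hzim : 0 < z.im) (hwim : 0 < w.im)
    (h : {x | quaternionRep z hz x = 0} = {x | quaternionRep w hw x = 0}) : z = w := by
  -- the minimal polynomial of `z` over `ℝ`, as `|z| = 1`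
  set p : ℝ[X] := X ^ 2 - C (2 * z.re) * X + 1
  have hp : ∀ v : ℂ, aeval v p = (v - z) * (v - starRingEnd ℂ z) := fun v => by
    rw [← Complex.sq_sub_two_re_mul_add_one (Complex.normSq_eq_one_of_pow_eq_neg_one hz)]
    simp [p]
  have hmem : aeval (MonoidAlgebra.of ℝ _ (a 1)) p ∈ {x | quaternionRep w hw x = 0} := by
    rw [← h, Set.mem_ofPred_eq, quaternionRep_aeval, hp, sub_self, zero_mul, coeComplex_zero]
  rw [Set.mem_ofPred_eq, quaternionRep_aeval, ← coe_ofComplex,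
    map_eq_zero_iff ofComplex ofComplex.toRingHom.injective, hp, mul_eq_zero, sub_eq_zero,
    sub_eq_zero] at hmem
  rcases hmem with rfl | rfl
  · rfl
  · rw [Complex.conj_im] at hwim
    linarith

end QuaternionGroup

/-- For `n ≥ 2`, the number of copies of `ℍ` in the Wedderburn decomposition
of `ℝ[Q_{4n}]` equals `⌊n/2⌋`.  (`Q_{4n} = QuaternionGroup n`.) -/
theorem stmt_17 (n : ℕ) (hn : 2 ≤ n) :
    mH (MonoidAlgebra ℝ (QuaternionGroup n)) = n / 2 := by
  have : NeZero n := ⟨by omega⟩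
  set K : {z : ℂ | z ^ n = -1 ∧ 0 < z.im} → Set (MonoidAlgebra ℝ (QuaternionGroup n)) :=
    fun z => {x | QuaternionGroup.quaternionRep z.1 z.2.1 x = 0}
  have hK : {s | ∃ f : MonoidAlgebra ℝ (QuaternionGroup n) →ₐ[ℝ] ℍ[ℝ],
      Function.Surjective f ∧ s = {x | f x = 0}} = Set.range K := by
    ext s
    constructor
    · rintro ⟨f, hf, rfl⟩
      obtain ⟨z, hz, hzim, ψ, rfl⟩ := QuaternionGroup.exists_eq_comp_quaternionRep f hf
      refine ⟨⟨z, hz, hzim⟩, ?_⟩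
      ext x
      simp [K, map_eq_zero_iff ψ ψ.toRingHom.injective]
    · rintro ⟨⟨z, hz, hzim⟩, rfl⟩
      exact ⟨_, QuaternionGroup.quaternionRep_surjective hz hzim.ne', rfl⟩
  have hKinj : K.Injective := fun z w h =>
    Subtype.ext (QuaternionGroup.eq_of_setOf_quaternionRep_eq_zero z.2.1 w.2.1 z.2.2 w.2.2 h)
  rw [mH, hK, Set.ncard_range_of_injective hKinj, Nat.card_coe_set_eq,
    Complex.ncard_setOf_pow_eq_neg_one_and_im_pos]
end
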